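/- arXiv:1603.05295 — 2 statements merged into one kernel-verified Lean document; each statement's English description precedes it below -/
import Mathlib

section
/- The function G is concave on the convex set Γ: for all λ, μ ∈ Γ and all t ∈ [0,1], G(tλ + (1−t)μ) ≥ t·G(λ) + (1−t)·G(μ). -/
open Finset

/-- The sum `∑_{i<j} 1/(λ_i + λ_j)` over pairs of indices. -/
noncomputable def pairSum (n : ℕ) (lam : Fin n → ℝ) : ℝ :=
  ∑ i : Fin n, ∑ j ∈ univ.filter (fun j => i < j), (lam i + lam j)⁻¹

/-- The fully nonlinear speed `G(λ) = (∑_{i<j} 1/(λ_i + λ_j))⁻¹`. -/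
noncomputable def Gfun (n : ℕ) (lam : Fin n → ℝ) : ℝ := (pairSum n lam)⁻¹

/-- Concavity of the harmonic-mean-type function `x ↦ (∑ 1/x_i)⁻¹`. -/
lemma harmonic_concave {ι : Type*} (s : Finset ι) (hs : s.Nonempty) (a b : ι → ℝ)
    (ha : ∀ i ∈ s, 0 < a i) (hb : ∀ i ∈ s, 0 < b i) (t : ℝ) (ht0 : 0 ≤ t) (ht1 : t ≤ 1) :
    t * (∑ i ∈ s, (a i)⁻¹)⁻¹ + (1 - t) * (∑ i ∈ s, (b i)⁻¹)⁻¹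
      ≤ (∑ i ∈ s, (t * a i + (1 - t) * b i)⁻¹)⁻¹ := by
  set c : ι → ℝ := fun i => t * a i + (1 - t) * b i with hc_def
  have hc : ∀ i ∈ s, 0 < c i := by
    intro i hi
    have h1 := ha i hi
    have h2 := hb i hi
    rcases lt_or_eq_of_le ht0 with h | h
    · have := mul_pos h h1
      have := mul_nonneg (by linarith : (0:ℝ) ≤ 1 - t) h2.le
      simp only [hc_def]; linarith
    · simp only [hc_def, ← h]; linarith
  have hSa : 0 < ∑ i ∈ s, (a i)⁻¹ :=
    Finset.sum_pos (fun i hi => inv_pos.2 (ha i hi)) hs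
  have hSb : 0 < ∑ i ∈ s, (b i)⁻¹ :=
    Finset.sum_pos (fun i hi => inv_pos.2 (hb i hi)) hs
  have hSc : 0 < ∑ i ∈ s, (c i)⁻¹ :=
    Finset.sum_pos (fun i hi => inv_pos.2 (hc i hi)) hs
  set Sc : ℝ := ∑ i ∈ s, (c i)⁻¹ with hSc_def
  set w : ι → ℝ := fun i => (c i)⁻¹ / Sc with hw_def
  have hw_sum : ∑ i ∈ s, w i = 1 := by
    simp only [hw_def, ← Finset.sum_div]
    exact div_self hSc.ne'
  have hw_c : ∑ i ∈ s, w i ^ 2 * c i = Sc⁻¹ := by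
    have : ∀ i ∈ s, w i ^ 2 * c i = (c i)⁻¹ / Sc ^ 2 := by
      intro i hi
      have hci := (hc i hi).ne'
      simp only [hw_def]
      field_simp
    rw [Finset.sum_congr rfl this, ← Finset.sum_div, ← hSc_def]
    rw [sq]
    field_simp
  have key : ∀ (f : ι → ℝ), (∀ i ∈ s, 0 < f i) →
      (∑ i ∈ s, (f i)⁻¹)⁻¹ ≤ ∑ i ∈ s, w i ^ 2 * f i := by
    intro f hf
    have := Finset.sq_sum_div_le_sum_sq_div s w (g := fun i => (f i)⁻¹)
      (fun i hi => inv_pos.2 (hf i hi))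
    rw [hw_sum, one_pow] at this
    calc (∑ i ∈ s, (f i)⁻¹)⁻¹ = 1 / ∑ i ∈ s, (f i)⁻¹ := (one_div _).symm
      _ ≤ ∑ i ∈ s, w i ^ 2 / (f i)⁻¹ := this
      _ = ∑ i ∈ s, w i ^ 2 * f i := by
          refine Finset.sum_congr rfl fun i hi => ?_
          rw [div_inv_eq_mul]
  have ka := key a ha
  have kb := key b hb
  have split : ∑ i ∈ s, w i ^ 2 * c i
      = t * ∑ i ∈ s, w i ^ 2 * a i + (1 - t) * ∑ i ∈ s, w i ^ 2 * b i := by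
    rw [Finset.mul_sum, Finset.mul_sum, ← Finset.sum_add_distrib]
    refine Finset.sum_congr rfl fun i hi => ?_
    simp only [hc_def]; ring
  have h1t : (0:ℝ) ≤ 1 - t := by linarith
  calc t * (∑ i ∈ s, (a i)⁻¹)⁻¹ + (1 - t) * (∑ i ∈ s, (b i)⁻¹)⁻¹
      ≤ t * ∑ i ∈ s, w i ^ 2 * a i + (1 - t) * ∑ i ∈ s, w i ^ 2 * b i :=
        add_le_add (mul_le_mul_of_nonneg_left ka ht0) (mul_le_mul_of_nonneg_left kb h1t)
    _ = ∑ i ∈ s, w i ^ 2 * c i := split.symm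
    _ = Sc⁻¹ := hw_c

/-- Concavity of `G` on the convex cone `Γ`: for `λ, μ ∈ Γ` and `t ∈ [0,1]`,
`G(tλ + (1-t)μ) ≥ t·G(λ) + (1-t)·G(μ)`. -/
theorem Gfun_concave (n : ℕ) (hn : 2 ≤ n) (lam mu : Fin n → ℝ)
    (hlam : ∀ i j : Fin n, i ≠ j → 0 < lam i + lam j)
    (hmu : ∀ i j : Fin n, i ≠ j → 0 < mu i + mu j)
    (t : ℝ) (ht0 : 0 ≤ t) (ht1 : t ≤ 1) :
    Gfun n (fun i => t * lam i + (1 - t) * mu i) ≥ t * Gfun n lam + (1 - t) * Gfun n mu := by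
  set S : Finset (Fin n × Fin n) := (univ ×ˢ univ).filter (fun p => p.1 < p.2) with hS_def
  have hrw : ∀ f : Fin n → ℝ, pairSum n f = ∑ p ∈ S, (f p.1 + f p.2)⁻¹ := by
    intro f
    simp only [pairSum, hS_def, Finset.sum_filter, Finset.sum_product]
  have hS_ne : S.Nonempty := by
    refine ⟨(⟨0, by omega⟩, ⟨1, by omega⟩), ?_⟩
    simp [hS_def, Fin.mk_lt_mk]
  have hA : ∀ p ∈ S, 0 < lam p.1 + lam p.2 := by
    intro p hp
    rw [hS_def, Finset.mem_filter] at hp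
    exact hlam _ _ (ne_of_lt hp.2)
  have hB : ∀ p ∈ S, 0 < mu p.1 + mu p.2 := by
    intro p hp
    rw [hS_def, Finset.mem_filter] at hp
    exact hmu _ _ (ne_of_lt hp.2)
  have main := harmonic_concave S hS_ne (fun p => lam p.1 + lam p.2)
    (fun p => mu p.1 + mu p.2) hA hB t ht0 ht1
  have hco : pairSum n (fun i => t * lam i + (1 - t) * mu i)
      = ∑ p ∈ S, (t * (lam p.1 + lam p.2) + (1 - t) * (mu p.1 + mu p.2))⁻¹ := by
    rw [hrw]
    refine Finset.sum_congr rfl fun p hp => ?_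
    ring_nf
  rw [ge_iff_le, Gfun, Gfun, Gfun, hrw lam, hrw mu, hco]
  exact main
end

section
/- Let n ≥ 2 and let λ ∈ ℝⁿ satisfy 0 ≤ λ_1 ≤ λ_2 ≤ ... ≤ λ_n and λ_1 + λ_2 > 0 (so λ ∈ Γ). Suppose that ∑_{i=1}^n (∑_{j ≠ i} (λ_i + λ_j)^{-2}) · λ_i · (λ_n − λ_i) = 0. Then exactly one of the following holds: (i) λ_1 = 0 and λ_2 = λ_3 = ... = λ_n, in which case λ_n = ((n−1)(n+2)/4)·G(λ); or (ii) λ_1 = λ_2 = ... = λ_n, in which case λ_n = (n(n−1)/4)·G(λ). In either case, λ_n ≤ ((n−1)(n+2)/4)·G(λ). (This is the rigidity dichotomy arising in the classification of limit flows attaining the sharp curvature pinching constant.) -/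
open Finset

/-! Each summand of the hypothesis is a product of a positive weight (λ lies in Γ), `λ_i ≥ 0`
and `λ_n - λ_i ≥ 0`, so all of them vanish and every `λ_i` is `0` or `λ_n`. Because `λ_2 > 0`,
only `λ_1` can be `0`, which leaves the two configurations; in each of them the pair sum is
evaluated by splitting off the first index. -/

theorem pairSum_succ (m : ℕ) (lam : Fin (m + 1) → ℝ) :
    pairSum (m + 1) lam =
      ∑ j : Fin m, (lam 0 + lam j.succ)⁻¹ + pairSum m (fun j => lam j.succ) := by
  simp only [pairSum, Finset.sum_filter, Fin.sum_univ_succ, Fin.succ_lt_succ_iff, Fin.succ_pos,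
    Fin.not_lt_zero, if_true, if_false, zero_add]

theorem pairSum_const (n : ℕ) (c : ℝ) :
    pairSum n (fun _ => c) = (n : ℝ) * (n - 1) / 2 * (2 * c)⁻¹ := by
  induction n with
  | zero => simp [pairSum]
  | succ m ih =>
    rw [pairSum_succ, ih]
    simp only [Finset.sum_const, Finset.card_univ, Fintype.card_fin, nsmul_eq_mul, ← two_mul]
    push_cast
    ring

theorem pairSum_eq_of_head_eq_zero {n : ℕ} (hn : 0 < n) (lam : Fin n → ℝ) {L : ℝ}
    (h0 : lam ⟨0, hn⟩ = 0) (htail : ∀ i : Fin n, (i : ℕ) ≠ 0 → lam i = L) :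
    pairSum n lam = ((n : ℝ) - 1) * (n + 2) / (4 * L) := by
  obtain ⟨m, rfl⟩ := Nat.exists_eq_add_one_of_ne_zero hn.ne'
  have htail' : ∀ j : Fin m, lam j.succ = L := fun j => htail j.succ (by simp)
  rw [pairSum_succ, show lam 0 = 0 from h0]
  simp only [htail', pairSum_const, zero_add, Finset.sum_const, Finset.card_univ,
    Fintype.card_fin, nsmul_eq_mul]
  push_cast
  ring

theorem pairSum_eq_of_forall_eq {n : ℕ} (lam : Fin n → ℝ) {L : ℝ} (h : ∀ i, lam i = L) :
    pairSum n lam = (n : ℝ) * (n - 1) / (4 * L) := by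
  rw [show lam = fun _ => L from funext h, pairSum_const]
  ring

theorem eq_mul_Gfun_of_pairSum_eq {n : ℕ} {lam : Fin n → ℝ} {k L : ℝ} (hk : k ≠ 0)
    (h : pairSum n lam = k / (4 * L)) : L = k / 4 * Gfun n lam := by
  rw [Gfun, h, inv_div]
  field_simp

theorem add_pos_of_monotone {n : ℕ} (h1 : 1 < n) {lam : Fin n → ℝ} (hsort : Monotone lam)
    (h2conv : 0 < lam ⟨0, by omega⟩ + lam ⟨1, h1⟩) {i j : Fin n} (hij : i ≠ j) :
    0 < lam i + lam j := by
  have key : ∀ a b : Fin n, a < b → 0 < lam a + lam b := fun a b hab => by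
    have ha : lam ⟨0, by omega⟩ ≤ lam a := hsort (Fin.mk_le_of_le_val (Nat.zero_le _))
    have hb : lam ⟨1, h1⟩ ≤ lam b := hsort (Fin.mk_le_of_le_val (by omega))
    linarith
  rcases hij.lt_or_gt with h | h
  · exact key i j h
  · linarith [key j i h]

theorem sum_inv_sq_add_pos {n : ℕ} (h1 : 1 < n) {lam : Fin n → ℝ} (hsort : Monotone lam)
    (h2conv : 0 < lam ⟨0, by omega⟩ + lam ⟨1, h1⟩) (i : Fin n) :
    0 < ∑ j ∈ univ.filter (fun j => j ≠ i), ((lam i + lam j) ^ 2)⁻¹ := by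
  have : Nontrivial (Fin n) := Fin.nontrivial_iff_two_le.mpr h1
  obtain ⟨j, hj⟩ := exists_ne i
  refine Finset.sum_pos (fun j hj => ?_) ⟨j, by simpa using hj⟩
  have := add_pos_of_monotone h1 hsort h2conv (Finset.mem_filter.mp hj).2.symm
  positivity

theorem eq_zero_or_eq_of_sum_mul_mul_sub_eq_zero {ι : Type*} (s : Finset ι) {w x : ι → ℝ}
    {M : ℝ} (hw : ∀ i ∈ s, 0 < w i) (hx : ∀ i ∈ s, 0 ≤ x i) (hxM : ∀ i ∈ s, x i ≤ M)
    (h : ∑ i ∈ s, w i * x i * (M - x i) = 0) : ∀ i ∈ s, x i = 0 ∨ x i = M := by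
  intro i hi
  have hterm := (Finset.sum_eq_zero_iff_of_nonneg fun j hj =>
    mul_nonneg (mul_nonneg (hw j hj).le (hx j hj)) (sub_nonneg.mpr (hxM j hj))).mp h i hi
  rcases mul_eq_zero.mp hterm with hwx | hMx
  · exact .inl ((mul_eq_zero.mp hwx).resolve_left (hw i hi).ne')
  · exact .inr (sub_eq_zero.mp hMx).symm

/-- Rigidity dichotomy: if `0 ≤ λ₁ ≤ … ≤ λ_n`, `λ₁ + λ₂ > 0`, and
`∑_i (∑_{j≠i} (λ_i+λ_j)⁻²) λ_i (λ_n - λ_i) = 0`, then exactly one of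
(i) `λ₁ = 0`, `λ₂ = ⋯ = λ_n` and `λ_n = ((n-1)(n+2)/4)·G(λ)`; or
(ii) `λ₁ = ⋯ = λ_n` and `λ_n = (n(n-1)/4)·G(λ)` holds.
In either case `λ_n ≤ ((n-1)(n+2)/4)·G(λ)`. -/
theorem rigidity_dichotomy (n : ℕ) (hn : 2 ≤ n) (lam : Fin n → ℝ)
    (hsort : Monotone lam)
    (hnonneg : 0 ≤ lam ⟨0, by omega⟩)
    (h2conv : 0 < lam ⟨0, by omega⟩ + lam ⟨1, by omega⟩)
    (hsum : ∑ i : Fin n,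
        (∑ j ∈ univ.filter (fun j => j ≠ i), ((lam i + lam j) ^ 2)⁻¹) *
          lam i * (lam ⟨n - 1, by omega⟩ - lam i) = 0) :
    Xor'
      (lam ⟨0, by omega⟩ = 0 ∧
        (∀ i : Fin n, (i : ℕ) ≠ 0 → lam i = lam ⟨n - 1, by omega⟩) ∧
        lam ⟨n - 1, by omega⟩ = (((n : ℝ) - 1) * ((n : ℝ) + 2) / 4) * Gfun n lam)
      ((∀ i : Fin n, lam i = lam ⟨n - 1, by omega⟩) ∧
        lam ⟨n - 1, by omega⟩ = ((n : ℝ) * ((n : ℝ) - 1) / 4) * Gfun n lam) ∧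
    lam ⟨n - 1, by omega⟩ ≤ (((n : ℝ) - 1) * ((n : ℝ) + 2) / 4) * Gfun n lam := by
  set L := lam ⟨n - 1, by omega⟩
  have hn' : (2 : ℝ) ≤ n := by exact_mod_cast hn
  have hdich := eq_zero_or_eq_of_sum_mul_mul_sub_eq_zero univ
    (fun i _ => sum_inv_sq_add_pos hn hsort h2conv i)
    (fun i _ => hnonneg.trans (hsort (Fin.mk_le_of_le_val (Nat.zero_le _))))
    (fun i _ => hsort (Nat.le_sub_one_of_lt i.2)) hsum
  have h1 : 0 < lam ⟨1, by omega⟩ := by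
    linarith [hsort (show (⟨0, by omega⟩ : Fin n) ≤ ⟨1, by omega⟩ from Fin.mk_le_mk.mpr zero_le_one)]
  have htail : ∀ i : Fin n, (i : ℕ) ≠ 0 → lam i = L := fun i hi =>
    (hdich i (mem_univ i)).resolve_left
      (h1.trans_le (hsort (Fin.mk_le_of_le_val (by omega)))).ne'
  have hL : 0 < L := htail ⟨1, by omega⟩ one_ne_zero ▸ h1
  rcases hdich ⟨0, by omega⟩ (mem_univ _) with h0 | h0
  · have hG := eq_mul_Gfun_of_pairSum_eq (by nlinarith)
      (pairSum_eq_of_head_eq_zero (by omega) lam h0 htail)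
    exact ⟨.inl ⟨⟨h0, htail, hG⟩, fun h => hL.ne' ((h.1 _).symm.trans h0)⟩, hG.le⟩
  · have hall : ∀ i, lam i = L := fun i =>
      if hi : (i : ℕ) = 0 then (Fin.ext hi : i = ⟨0, by omega⟩) ▸ h0 else htail i hi
    have hG := eq_mul_Gfun_of_pairSum_eq (by nlinarith) (pairSum_eq_of_forall_eq lam hall)
    have hGpos : 0 < Gfun n lam := pos_of_mul_pos_right (hG ▸ hL) (by nlinarith)
    refine ⟨.inr ⟨⟨hall, hG⟩, fun h => hL.ne' (h0.symm.trans h.1)⟩, ?_⟩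
    calc L = (n : ℝ) * (n - 1) / 4 * Gfun n lam := hG
      _ ≤ ((n : ℝ) - 1) * (n + 2) / 4 * Gfun n lam :=
        mul_le_mul_of_nonneg_right (by nlinarith) hGpos.le
end
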